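/- Let n ≥ 1 and B_i = 2^i · i!. The map b_n : B_n → {0, 1, ..., 2^n·n! − 1} defined by b_n(π) = Σ_{i=1}^{n} inv_i(π) · B_{n−i} is a bijection. -/

import Mathlib

/-- A signed permutation `π` of `[n]`: `π(i) = ε i · σ(i)` with `σ` a permutation
of `[n]` and signs `ε i ∈ {±1}`.  Positions are encoded by `Fin n`
(position `i ∈ [n]` corresponds to `⟨i-1, _⟩ : Fin n`). -/
structure SignedPerm (n : ℕ) where
  σ : Equiv.Perm (Fin n)
  ε : Fin n → ℤ
  hε : ∀ i, ε i = 1 ∨ ε i = -1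

namespace SignedPerm

variable {n : ℕ}

/-- The signed value `π(i) = ε i · σ(i) ∈ {-n, …, -1, 1, …, n}` (1-based value). -/
def val (π : SignedPerm n) (i : Fin n) : ℤ :=
  π.ε i * ((π.σ i : ℕ) + 1)

/-- The standard basis vector `e i` of `ℝ^n`. -/
def e (i : Fin n) : Fin n → ℝ := Pi.single i 1

/-- The action of a signed permutation on `ℝ^n`, determined by
`π · e i = ε i · e (σ i)`. -/
def act (π : SignedPerm n) (v : Fin n → ℝ) : Fin n → ℝ :=
  fun j => (π.ε (π.σ.symm j) : ℝ) * v (π.σ.symm j)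

/-- The positive root system `Φₙ⁺ = {e k, e i + e j, e i - e j : k, i < j}` of `Bₙ`. -/
def PhiPos (n : ℕ) : Set (Fin n → ℝ) :=
  {v | (∃ k : Fin n, v = e k) ∨ ∃ i j : Fin n, i < j ∧ (v = e i + e j ∨ v = e i - e j)}

/-- The positive roots `Φₙ,ᵢ⁺ = {e i, e i + e j, e i - e j : i < j ≤ n}`. -/
def PhiPosI (n : ℕ) (i : Fin n) : Set (Fin n → ℝ) :=
  {v | v = e i ∨ ∃ j : Fin n, i < j ∧ (v = e i + e j ∨ v = e i - e j)}

/-- The `i`-inversion number `invᵢ π = #{v ∈ Φₙ,ᵢ⁺ : π · v ∈ -Φₙ⁺}`. -/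
noncomputable def invi (i : Fin n) (π : SignedPerm n) : ℕ :=
  Set.ncard {v | v ∈ PhiPosI n i ∧ -(π.act v) ∈ PhiPos n}

/-- The inversion number `inv π = #{v ∈ Φₙ⁺ : π · v ∈ -Φₙ⁺}`. -/
noncomputable def inv (π : SignedPerm n) : ℕ :=
  Set.ncard {v | v ∈ PhiPos n ∧ -(π.act v) ∈ PhiPos n}

end SignedPerm

/-! Write `π(i) = εᵢ σ(i)` and let `cᵢ = #{j > i : σ j < σ i}` be the Lehmer code of `σ`,
so `0 ≤ cᵢ ≤ mᵢ := #{j > i}`. Testing the roots `e i`, `e i ± e j` (`j > i`) one by one gives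
`invᵢ π = cᵢ` if `εᵢ = 1` and `invᵢ π = 2mᵢ + 1 - cᵢ` if `εᵢ = -1`. Hence `invᵢ π < 2(mᵢ + 1)`,
and `invᵢ π` determines both `εᵢ` and `cᵢ`; as the Lehmer code determines `σ`, the numbers
`invᵢ π` determine `π`. Now `bₙ(π)` is the number with mixed-radix digits `invₙ π, …, inv₁ π`
in radices `2, 4, …, 2n`, whose place values are exactly `B_k = 2^k k!`; so `bₙ` is an
injection into `[0, 2^n n!)`, hence a bijection since `|Bₙ| = 2^n n!`. -/

open Finset

theorem Function.Bijective.bijOn_fin_val {α : Type*} {N : ℕ} {g : α → Fin N}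
    (hg : Function.Bijective g) : Set.BijOn (fun a => (g a : ℕ)) Set.univ {m | m < N} := by
  refine ⟨fun a _ => (g a).isLt, fun a _ b _ h => hg.injective (Fin.ext h), fun m hm => ?_⟩
  obtain ⟨a, ha⟩ := hg.surjective ⟨m, hm⟩
  exact ⟨a, trivial, congrArg Fin.val ha⟩

lemma Fin.prod_two_mul_succ (k : ℕ) : ∏ j : Fin k, 2 * ((j : ℕ) + 1) = 2 ^ k * k.factorial := by
  rw [Fin.prod_univ_eq_prod_range (fun j => 2 * (j + 1)), prod_mul_distrib, Finset.prod_const,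
    card_range, prod_range_add_one_eq_factorial]

namespace Equiv.Perm

variable {α : Type*} [Fintype α] [LinearOrder α]

def lehmerCode (σ : Perm α) (i : α) : ℕ := #{j | i < j ∧ σ j < σ i}

lemma lehmerCode_le (σ : Perm α) (i : α) : σ.lehmerCode i ≤ #{j | i < j} :=
  card_le_card (monotone_filter_right _ fun _ _ => And.left)

lemma lehmerCode_eq_sum (σ : Perm α) (i : α) :
    σ.lehmerCode i = ∑ j ∈ {j | i < j}, if σ j < σ i then 1 else 0 := by
  rw [lehmerCode, ← card_filter, filter_filter]

lemma lehmerCode_eq_card_unused (σ : Perm α) (i : α) :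
    σ.lehmerCode i = #{y | (∀ j < i, σ j ≠ y) ∧ y < σ i} := by
  refine card_nbij' σ σ.symm ?_ ?_ (fun j _ => σ.symm_apply_apply j)
    (fun y _ => σ.apply_symm_apply y)
  · intro j hj
    simp only [coe_filter, mem_univ, true_and] at hj ⊢
    exact ⟨fun k hk h => (hk.trans hj.1).ne (σ.injective h), hj.2⟩
  · intro y hy
    simp only [coe_filter, mem_univ, true_and] at hy ⊢
    obtain ⟨hunused, hy⟩ := hy
    refine ⟨lt_of_not_ge fun hle => ?_, by simpa using hy⟩
    rcases hle.lt_or_eq with hlt | heq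
    · exact hunused _ hlt (σ.apply_symm_apply y)
    · exact hy.ne (by rw [← heq, σ.apply_symm_apply])

lemma lehmerCode_lt_of_eqOn_Iio {σ τ : Perm α} {i : α} (hagree : ∀ j < i, σ j = τ j)
    (hlt : σ i < τ i) : σ.lehmerCode i < τ.lehmerCode i := by
  have hunused : ∀ y, (∀ j < i, τ j ≠ y) ↔ (∀ j < i, σ j ≠ y) := fun y =>
    forall₂_congr fun j hj => by rw [hagree j hj]
  rw [lehmerCode_eq_card_unused, lehmerCode_eq_card_unused]
  simp_rw [hunused]
  refine card_lt_card ⟨monotone_filter_right _ fun y _ hy => ⟨hy.1, hy.2.trans hlt⟩,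
    fun hsub => ?_⟩
  have hσi := hsub (mem_filter.2 ⟨mem_univ _, fun j hj h => hj.ne (σ.injective h), hlt⟩)
  exact lt_irrefl _ (mem_filter.1 hσi).2.2

theorem lehmerCode_injective : Function.Injective (lehmerCode : Perm α → α → ℕ) := by
  intro σ τ h
  by_contra hne
  obtain ⟨i, hi, hmin⟩ := exists_minimal_of_wellFoundedLT (fun i => σ i ≠ τ i)
    (not_forall.mp fun h' => hne (Equiv.ext h'))
  have hagree : ∀ j < i, σ j = τ j := fun j hj =>
    not_not.mp fun hj' => hj.not_ge (hmin hj' hj.le)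
  rcases lt_or_gt_of_ne hi with hlt | hlt
  · exact (lehmerCode_lt_of_eqOn_Iio hagree hlt).ne (congrFun h i)
  · exact (lehmerCode_lt_of_eqOn_Iio (fun j hj => (hagree j hj).symm) hlt).ne (congrFun h i).symm

lemma lehmerCode_fin_le {n : ℕ} (σ : Perm (Fin n)) (i : Fin n) : σ.lehmerCode i ≤ n - 1 - i := by
  simpa [filter_lt_eq_Ioi, Fin.card_Ioi] using σ.lehmerCode_le i

end Equiv.Perm

namespace SignedPerm

variable {n : ℕ}

lemma act_e (π : SignedPerm n) (i : Fin n) : π.act (e i) = (π.ε i : ℝ) • e (π.σ i) := by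
  funext m
  rcases eq_or_ne m (π.σ i) with rfl | hm
  · simp [act, e]
  · have : π.σ.symm m ≠ i := fun h => hm (by rw [← h, π.σ.apply_symm_apply])
    simp [act, e, hm, this]

lemma act_add (π : SignedPerm n) (v w : Fin n → ℝ) : π.act (v + w) = π.act v + π.act w := by
  funext m; simp [act, mul_add]

lemma act_sub (π : SignedPerm n) (v w : Fin n → ℝ) : π.act (v - w) = π.act v - π.act w := by
  funext m; simp [act, mul_sub]

lemma pos_of_mem_PhiPos {v : Fin n → ℝ} (hv : v ∈ PhiPos n) {m : Fin n}
    (hbefore : ∀ l < m, v l = 0) (hm : v m ≠ 0) : 0 < v m := by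
  rcases hv with ⟨k, rfl⟩ | ⟨i, j, hij, rfl | rfl⟩
  · obtain rfl : m = k := by by_contra h; simp [e, h] at hm
    simp [e]
  all_goals
    obtain rfl : m = i := by
      rcases lt_trichotomy m i with h | h | h
      · simp [e, h.ne, (h.trans hij).ne] at hm
      · exact h
      · simpa [e, hij.ne] using hbefore i h
    simp [e, hij.ne]

lemma smul_e_mem_PhiPos_iff {s : ℤ} (hs : s = 1 ∨ s = -1) (a : Fin n) :
    (s : ℝ) • e a ∈ PhiPos n ↔ s = 1 := by
  constructor
  · intro h
    have := pos_of_mem_PhiPos h (m := a) (fun l hl => by simp [e, hl.ne])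
      (by rcases hs with rfl | rfl <;> simp [e])
    rcases hs with rfl | rfl
    · rfl
    · norm_num [e] at this
  · rintro rfl
    exact Or.inl ⟨a, by simp⟩

lemma smul_e_add_smul_e_mem_PhiPos_iff {s t : ℤ} (hs : s = 1 ∨ s = -1) (ht : t = 1 ∨ t = -1)
    {a b : Fin n} (hab : a < b) : (s : ℝ) • e a + (t : ℝ) • e b ∈ PhiPos n ↔ s = 1 := by
  constructor
  · intro h
    have := pos_of_mem_PhiPos h (m := a) (fun l hl => by simp [e, hl.ne, (hl.trans hab).ne])
      (by rcases hs with rfl | rfl <;> simp [e, hab.ne])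
    rcases hs with rfl | rfl
    · rfl
    · norm_num [e, hab.ne] at this
  · rintro rfl
    rcases ht with rfl | rfl
    · exact Or.inr ⟨a, b, hab, Or.inl (by simp)⟩
    · exact Or.inr ⟨a, b, hab, Or.inr (by simp [sub_eq_add_neg])⟩

lemma smul_e_add_smul_e_mem_PhiPos_iff_of_gt {s t : ℤ} (hs : s = 1 ∨ s = -1)
    (ht : t = 1 ∨ t = -1) {a b : Fin n} (hba : b < a) :
    (s : ℝ) • e a + (t : ℝ) • e b ∈ PhiPos n ↔ t = 1 := by
  rw [add_comm]
  exact smul_e_add_smul_e_mem_PhiPos_iff ht hs hba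

lemma neg_act_e (π : SignedPerm n) (i : Fin n) :
    -(π.act (e i)) = ((-π.ε i : ℤ) : ℝ) • e (π.σ i) := by
  rw [act_e, Int.cast_neg, neg_smul]

lemma neg_act_e_add_e (π : SignedPerm n) (i j : Fin n) :
    -(π.act (e i + e j)) = ((-π.ε i : ℤ) : ℝ) • e (π.σ i) + ((-π.ε j : ℤ) : ℝ) • e (π.σ j) := by
  rw [act_add, neg_add, neg_act_e, neg_act_e]

lemma neg_act_e_sub_e (π : SignedPerm n) (i j : Fin n) :
    -(π.act (e i - e j)) = ((-π.ε i : ℤ) : ℝ) • e (π.σ i) + ((π.ε j : ℤ) : ℝ) • e (π.σ j) := by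
  rw [act_sub, neg_sub, sub_eq_neg_add, neg_act_e, act_e]

lemma neg_ε_eq_one_or (π : SignedPerm n) (i : Fin n) : -π.ε i = 1 ∨ -π.ε i = -1 := by
  have := π.hε i; omega

lemma neg_act_e_mem_PhiPos_iff (π : SignedPerm n) (i : Fin n) :
    -(π.act (e i)) ∈ PhiPos n ↔ π.ε i = -1 := by
  rw [neg_act_e, smul_e_mem_PhiPos_iff (π.neg_ε_eq_one_or i)]
  omega

open Classical in
lemma card_inversions_e_add_e_e_sub_e (π : SignedPerm n) {i j : Fin n} (hij : i ≠ j) :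
    ((if -(π.act (e i + e j)) ∈ PhiPos n then 1 else 0) +
        if -(π.act (e i - e j)) ∈ PhiPos n then 1 else 0) =
      if π.ε i = 1 then (if π.σ j < π.σ i then 1 else 0)
      else 2 - (if π.σ j < π.σ i then 1 else 0) := by
  rw [neg_act_e_add_e, neg_act_e_sub_e]
  rcases lt_or_gt_of_ne (π.σ.injective.ne hij) with h | h
  · simp only [smul_e_add_smul_e_mem_PhiPos_iff (π.neg_ε_eq_one_or i) (π.neg_ε_eq_one_or j) h,
      smul_e_add_smul_e_mem_PhiPos_iff (π.neg_ε_eq_one_or i) (π.hε j) h, h.not_gt]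
    rcases π.hε i with hεi | hεi <;> simp [hεi]
  · simp only [smul_e_add_smul_e_mem_PhiPos_iff_of_gt (π.neg_ε_eq_one_or i) (π.neg_ε_eq_one_or j) h,
      smul_e_add_smul_e_mem_PhiPos_iff_of_gt (π.neg_ε_eq_one_or i) (π.hε j) h, h]
    rcases π.hε i with hεi | hεi <;> rcases π.hε j with hεj | hεj <;> simp [hεi, hεj]

lemma e_injective : Function.Injective (e : Fin n → Fin n → ℝ) := fun j k h => by
  by_contra hjk
  simpa [e, hjk] using congrFun h j

def rootOfIndex (i : Fin n) : Option (Ioi i × Bool) → Fin n → ℝ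
  | none => e i
  | some (j, true) => e i + e j
  | some (j, false) => e i - e j

lemma rootOfIndex_injective (i : Fin n) : Function.Injective (rootOfIndex i) := by
  have e_ne_zero (j : Fin n) : e j ≠ 0 := by simp [e]
  have e_ne_neg_e (j k : Fin n) : e j ≠ -e k := fun h => by
    have := congrFun h j
    by_cases hjk : j = k <;> simp [e, hjk] at this
    linarith
  rintro (_ | ⟨j, _ | _⟩) (_ | ⟨k, _ | _⟩) h <;> simp only [rootOfIndex] at h
  all_goals first
    | rfl
    | exact absurd (by simpa using h) (e_ne_zero _)
    | exact absurd (by simpa using h.symm) (e_ne_zero _)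
    | exact absurd (by simpa [sub_eq_add_neg] using h) (e_ne_neg_e _ _)
    | exact absurd (by simpa [sub_eq_add_neg] using h.symm) (e_ne_neg_e _ _)
    | (obtain rfl : j = k := Subtype.ext (e_injective (by simpa using h)); rfl)

lemma range_rootOfIndex (i : Fin n) : Set.range (rootOfIndex i) = PhiPosI n i := by
  ext v
  constructor
  · rintro ⟨_ | ⟨⟨j, hj⟩, _ | _⟩, rfl⟩
    · exact Or.inl rfl
    · exact Or.inr ⟨j, mem_Ioi.1 hj, Or.inr rfl⟩
    · exact Or.inr ⟨j, mem_Ioi.1 hj, Or.inl rfl⟩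
  · rintro (rfl | ⟨j, hj, rfl | rfl⟩)
    · exact ⟨none, rfl⟩
    · exact ⟨some (⟨j, mem_Ioi.2 hj⟩, true), rfl⟩
    · exact ⟨some (⟨j, mem_Ioi.2 hj⟩, false), rfl⟩

open Classical in
lemma invi_eq_sum (i : Fin n) (π : SignedPerm n) :
    invi i π = ∑ t, if -(π.act (rootOfIndex i t)) ∈ PhiPos n then 1 else 0 := by
  have hset : {v | v ∈ PhiPosI n i ∧ -(π.act v) ∈ PhiPos n} =
      rootOfIndex i '' {t | -(π.act (rootOfIndex i t)) ∈ PhiPos n} := by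
    rw [← range_rootOfIndex]
    ext v
    constructor
    · rintro ⟨⟨t, rfl⟩, h⟩
      exact ⟨t, h, rfl⟩
    · rintro ⟨t, h, rfl⟩
      exact ⟨⟨t, rfl⟩, h⟩
  rw [invi, hset, Set.ncard_image_of_injective _ (rootOfIndex_injective i),
    Set.ncard_eq_toFinset_card', Set.toFinset_ofPred, card_filter]

open Classical in
lemma invi_eq (π : SignedPerm n) (i : Fin n) :
    invi i π =
      if π.ε i = 1 then π.σ.lehmerCode i else 2 * (n - 1 - i) + 1 - π.σ.lehmerCode i := by
  have hpairs :
      ∑ j : Ioi i, ∑ b, (if -(π.act (rootOfIndex i (some (j, b)))) ∈ PhiPos n then 1 else 0) =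
      ∑ j ∈ Ioi i, if π.ε i = 1 then (if π.σ j < π.σ i then 1 else 0)
        else 2 - (if π.σ j < π.σ i then 1 else 0) := by
    rw [← sum_coe_sort (Ioi i)]
    refine sum_congr rfl fun j _ => ?_
    rw [Fintype.sum_bool]
    exact card_inversions_e_add_e_e_sub_e π (mem_Ioi.1 j.2).ne
  have hnone : (if -(π.act (rootOfIndex i none)) ∈ PhiPos n then 1 else 0) =
      if π.ε i = -1 then 1 else 0 :=
    if_congr (π.neg_act_e_mem_PhiPos_iff i) rfl rfl
  rw [invi_eq_sum, Fintype.sum_option, Fintype.sum_prod_type, hpairs,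
    hnone, π.σ.lehmerCode_eq_sum, filter_lt_eq_Ioi]
  rcases π.hε i with h | h
  · simp [h]
  · have hsum : ∑ j ∈ Ioi i, (2 - if π.σ j < π.σ i then 1 else 0) +
        ∑ j ∈ Ioi i, (if π.σ j < π.σ i then 1 else 0) = 2 * (n - 1 - i) := by
      rw [← sum_add_distrib, sum_congr rfl fun j _ => tsub_add_cancel_of_le (by split_ifs <;> simp),
        sum_const, Fin.card_Ioi, smul_eq_mul, mul_comm]
    simp only [h, reduceCtorEq, if_false, if_true]
    omega

lemma invi_lt (π : SignedPerm n) (i : Fin n) : invi i π < 2 * (n - i) := by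
  have := π.σ.lehmerCode_fin_le i
  have := i.isLt
  rw [invi_eq]
  split_ifs <;> omega

lemma ε_eq_and_lehmerCode_eq_of_invi_eq {π π' : SignedPerm n} {i : Fin n}
    (h : invi i π = invi i π') :
    π.ε i = π'.ε i ∧ π.σ.lehmerCode i = π'.σ.lehmerCode i := by
  have := π.σ.lehmerCode_fin_le i
  have := π'.σ.lehmerCode_fin_le i
  rw [invi_eq, invi_eq] at h
  rcases π.hε i with h₁ | h₁ <;> rcases π'.hε i with h₂ | h₂ <;> simp [h₁, h₂] at h ⊢ <;> omega

lemma ext {π π' : SignedPerm n} (hσ : π.σ = π'.σ) (hε : π.ε = π'.ε) : π = π' := by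
  cases π
  cases π'
  subst hσ hε
  rfl

noncomputable def equivPermUnits : SignedPerm n ≃ Equiv.Perm (Fin n) × (Fin n → ℤˣ) where
  toFun π := (π.σ, fun i => (Int.isUnit_iff.mpr (π.hε i)).unit)
  invFun p := ⟨p.1, fun i => p.2 i, fun i => Int.isUnit_iff.mp (p.2 i).isUnit⟩
  left_inv _ := rfl
  right_inv _ := Prod.ext rfl (funext fun _ => Units.ext rfl)

lemma card_eq_two_pow_mul_factorial : Nat.card (SignedPerm n) = 2 ^ n * n.factorial := by
  rw [Nat.card_congr equivPermUnits, Nat.card_eq_fintype_card, Fintype.card_prod,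
    Fintype.card_perm, Fintype.card_fun, Fintype.card_units_int, Fintype.card_fin, mul_comm]

noncomputable def inversionDigits (π : SignedPerm n) (k : Fin n) : Fin (2 * (k + 1)) :=
  ⟨invi k.rev π, by simpa [Fin.val_rev, Nat.sub_sub_self k.isLt] using invi_lt π k.rev⟩

lemma inversionDigits_injective : Function.Injective (inversionDigits (n := n)) := by
  intro π π' h
  have hinvi (i : Fin n) : invi i π = invi i π' := by
    simpa [inversionDigits] using congrArg Fin.val (congrFun h i.rev)
  refine ext (Equiv.Perm.lehmerCode_injective (funext fun i => ?_)) (funext fun i => ?_)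
  · exact (ε_eq_and_lehmerCode_eq_of_invi_eq (hinvi i)).2
  · exact (ε_eq_and_lehmerCode_eq_of_invi_eq (hinvi i)).1

lemma inversionDigits_bijective : Function.Bijective (inversionDigits (n := n)) := by
  refine (Nat.bijective_iff_injective_and_card _).mpr ⟨inversionDigits_injective, ?_⟩
  simp [card_eq_two_pow_mul_factorial, Fin.prod_two_mul_succ]

lemma val_finPiFinEquiv_inversionDigits (π : SignedPerm n) :
    (finPiFinEquiv (inversionDigits π) : ℕ) =
      ∑ i : Fin n, invi i π * (2 ^ (n - 1 - i.val) * Nat.factorial (n - 1 - i.val)) := by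
  rw [finPiFinEquiv_apply, ← Equiv.sum_comp Fin.revPerm]
  simp [inversionDigits, Fin.prod_two_mul_succ, Nat.sub_sub, add_comm]

end SignedPerm

open SignedPerm in
theorem b_bijective_general (n : ℕ) :
    Set.BijOn
      (fun π : SignedPerm n =>
        ∑ i : Fin n, invi i π * (2 ^ (n - 1 - i.val) * Nat.factorial (n - 1 - i.val)))
      Set.univ {m : ℕ | m < 2 ^ n * Nat.factorial n} := by
  simp_rw [← val_finPiFinEquiv_inversionDigits, ← Fin.prod_two_mul_succ]
  exact (finPiFinEquiv.bijective.comp inversionDigits_bijective).bijOn_fin_val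

open SignedPerm in
/-- With `Bᵢ = 2^i · i!`, the map
`bₙ(π) = ∑_{i=1}^{n} invᵢ(π) · B_{n-i}` is a bijection from `Bₙ` onto
`{0, 1, …, 2^n·n! - 1}` (position `i ∈ [n]` is `i.val + 1` in 1-based indexing,
so `n - i = n - 1 - i.val`). -/
theorem b_bijective (n : ℕ) (hn : 1 ≤ n) :
    Set.BijOn
      (fun π : SignedPerm n =>
        ∑ i : Fin n, invi i π * (2 ^ (n - 1 - i.val) * Nat.factorial (n - 1 - i.val)))
      Set.univ {m : ℕ | m < 2 ^ n * Nat.factorial n} :=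
  b_bijective_general n
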